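/- Uniform bound for the Kac–Rice kernel: There is an absolute constant C₁ > 0 with the following property. For every integer N ≥ 2, every pair of linearly independent vectors b₁, b₂ ∈ ℝ^N, and every ε with 0 < ε ≤ ‖b₁‖, one has (1/(2ε)) ∫_{ℝ^N} 1_{[−ε,ε]}(⟨b₁,a⟩) · |⟨b₂,a⟩| dγ_N(a) ≤ C₁ · ‖b₂‖/‖b₁‖. -/

import Mathlib

/-!
The density of `gaussianN N` has characteristic function `exp (-‖t‖² / 2)`, so `gaussianN N` is
the standard Gaussian: in every orthonormal basis its coordinates are independent standard
normals. Gram–Schmidt applied to `b₁, b₂` gives a basis in which `⟪b₁, a⟫ = r x₀` and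
`⟪b₂, a⟫ = c₁ x₀ + c₂ x₁`, with `|r| = ‖b₁‖` and `|c₁|, |c₂| ≤ ‖b₂‖`. The window `|r x₀| ≤ ε` has
Gaussian mass at most `ε / ‖b₁‖` (the standard normal density is below `1/2`), and by independence
the factor `|c₁ x₀ + c₂ x₁|` contributes at most `‖b₂‖ (ε / ‖b₁‖ + 𝔼|x₁|) ≤ 2 ‖b₂‖`, using
`|t| ≤ (1 + t²) / 2`. Hence `C₁ = 1` works.
-/

open MeasureTheory Real ENNReal

/-- The standard Gaussian measure on `ℝ^N`. -/
noncomputable def gaussianN (N : ℕ) : Measure (EuclideanSpace ℝ (Fin N)) :=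
  volume.withDensity fun a => ENNReal.ofReal ((2 * π) ^ (-(N : ℝ) / 2) * Real.exp (-‖a‖ ^ 2 / 2))

open ProbabilityTheory

lemma integral_gaussianN_density (N : ℕ) :
    ∫ a : EuclideanSpace ℝ (Fin N), (2 * π) ^ (-(N : ℝ) / 2) * Real.exp (-‖a‖ ^ 2 / 2) = 1 := by
  have hexp : ∀ a : EuclideanSpace ℝ (Fin N), -‖a‖ ^ 2 / 2 = -(1 / 2) * ‖a‖ ^ 2 :=
    fun a => by ring
  simp_rw [integral_const_mul, hexp, GaussianFourier.integral_rexp_neg_mul_sq_norm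
    (one_half_pos (α := ℝ)), finrank_euclideanSpace_fin]
  rw [div_div_eq_mul_div, div_one, mul_comm π, ← Real.rpow_add (by positivity), neg_div,
    neg_add_cancel, Real.rpow_zero]

instance isProbabilityMeasure_gaussianN (N : ℕ) : IsProbabilityMeasure (gaussianN N) := by
  have hint := Integrable.of_integral_ne_zero
    ((integral_gaussianN_density N).trans_ne one_ne_zero)
  constructor
  rw [gaussianN, withDensity_apply _ MeasurableSet.univ, Measure.restrict_univ,
    ← ofReal_integral_eq_lintegral_ofReal hint (ae_of_all _ fun _ => by positivity),
    integral_gaussianN_density, ENNReal.ofReal_one]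

lemma charFun_gaussianN (N : ℕ) (t : EuclideanSpace ℝ (Fin N)) :
    charFun (gaussianN N) t = Complex.exp (-‖t‖ ^ 2 / 2) := by
  have h2π : (0 : ℝ) < 2 * π := by positivity
  have hdens : Measurable fun a : EuclideanSpace ℝ (Fin N) =>
      ((2 * π) ^ (-(N : ℝ) / 2) * Real.exp (-‖a‖ ^ 2 / 2)).toNNReal := by fun_prop
  have hintegrand : ∀ x : EuclideanSpace ℝ (Fin N),
      ((2 * π) ^ (-(N : ℝ) / 2) * Real.exp (-‖x‖ ^ 2 / 2)).toNNReal
          • Complex.exp (inner ℝ x t * Complex.I)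
        = ((2 * π) ^ (-(N : ℝ) / 2) : ℝ)
          * Complex.exp (-(1 / 2) * ‖x‖ ^ 2 + Complex.I * inner ℝ t x) := by
    intro x
    rw [NNReal.smul_def, Real.coe_toNNReal _ (by positivity), Complex.real_smul,
      Complex.ofReal_mul, Complex.ofReal_exp, mul_assoc, ← Complex.exp_add, real_inner_comm]
    push_cast
    ring_nf
  have hpi : (π : ℂ) / (1 / 2) = ((2 * π : ℝ) : ℂ) := by push_cast; ring
  rw [charFun_apply, gaussianN]
  -- `ENNReal.ofReal x` is by definition the coercion of `x.toNNReal`.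
  erw [integral_withDensity_eq_integral_smul hdens]
  simp_rw [hintegrand, integral_const_mul,
    GaussianFourier.integral_cexp_neg_mul_sq_norm_add (by norm_num : (0 : ℝ) < (1 / 2 : ℂ).re),
    finrank_euclideanSpace_fin]
  rw [Complex.ofReal_cpow h2π.le, hpi, ← mul_assoc,
    ← Complex.cpow_add _ _ (by exact_mod_cast h2π.ne')]
  push_cast
  rw [neg_div, neg_add_cancel, Complex.cpow_zero, one_mul, Complex.I_sq]
  ring_nf

lemma gaussianN_eq_stdGaussian (N : ℕ) : gaussianN N = stdGaussian (EuclideanSpace ℝ (Fin N)) :=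
  Measure.ext_of_charFun <| funext fun t => by rw [charFun_gaussianN, charFun_stdGaussian]

lemma lintegral_gaussianN_eq_lintegral_pi {N : ℕ} {ι : Type*} [Fintype ι]
    (B : OrthonormalBasis ι ℝ (EuclideanSpace ℝ (Fin N)))
    {F : EuclideanSpace ℝ (Fin N) → ℝ≥0∞} (hF : Measurable F) :
    ∫⁻ a, F a ∂gaussianN N
      = ∫⁻ x, F (∑ k, x k • B k) ∂Measure.pi fun _ : ι => gaussianReal 0 1 := by
  rw [gaussianN_eq_stdGaussian, stdGaussian_eq_map_pi_orthonormalBasis B,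
    lintegral_map hF (by fun_prop)]

open InnerProductSpace in
lemma exists_orthonormalBasis_inner_sum_smul {E : Type*} [NormedAddCommGroup E]
    [InnerProductSpace ℝ E] [FiniteDimensional ℝ E] {n : ℕ} (hE : Module.finrank ℝ E = n + 2)
    (b₁ b₂ : E) :
    ∃ B : OrthonormalBasis (Fin (n + 2)) ℝ E, |inner ℝ b₁ (B 0)| = ‖b₁‖ ∧
      ∀ x : Fin (n + 2) → ℝ,
        inner ℝ b₁ (∑ k, x k • B k) = inner ℝ b₁ (B 0) * x 0 ∧
        inner ℝ b₂ (∑ k, x k • B k) = inner ℝ b₂ (B 0) * x 0 + inner ℝ b₂ (B 1) * x 1 := by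
  let f : Fin (n + 2) → E := Fin.cons b₁ fun _ => b₂
  let B := gramSchmidtOrthonormalBasis (hE.trans (Fintype.card_fin _).symm) f
  have hb₁ : ∀ k, k ≠ 0 → inner ℝ b₁ (B k) = 0 := fun k hk => by
    rw [real_inner_comm]
    exact gramSchmidtOrthonormalBasis_inv_triangular _ f (i := 0) (Fin.pos_iff_ne_zero.2 hk)
  have hb₂ : ∀ k, k ≠ 0 ∧ k ≠ 1 → inner ℝ b₂ (B k) = 0 := fun k hk => by
    rw [real_inner_comm]
    refine gramSchmidtOrthonormalBasis_inv_triangular _ f (i := 1) ?_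
    simp only [ne_eq, Fin.ext_iff, Fin.val_zero, Fin.val_one] at hk
    rw [Fin.lt_def, Fin.val_one]
    omega
  have hsum : ∀ x : Fin (n + 2) → ℝ,
      inner ℝ b₁ (∑ k, x k • B k) = inner ℝ b₁ (B 0) * x 0 ∧
      inner ℝ b₂ (∑ k, x k • B k) = inner ℝ b₂ (B 0) * x 0 + inner ℝ b₂ (B 1) * x 1 := by
    intro x
    simp_rw [inner_sum, inner_smul_right, mul_comm (x _)]
    exact ⟨Fintype.sum_eq_single 0 fun k hk => by rw [hb₁ k hk, zero_mul],
      Fintype.sum_eq_add 0 1 (by simp) fun k hk => by rw [hb₂ k hk, zero_mul]⟩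
  refine ⟨B, ?_, hsum⟩
  have h := (hsum fun k => inner ℝ (B k) b₁).1
  rw [B.sum_repr', real_inner_self_eq_norm_sq, real_inner_comm b₁ (B 0)] at h
  rw [← abs_norm, ← sq_eq_sq_iff_abs_eq_abs, h, sq]

lemma lintegral_comp_eval_mul_comp_eval {ι α : Type*} [Fintype ι] [MeasurableSpace α]
    (μ : Measure α) [IsProbabilityMeasure μ] {i j : ι} (hij : i ≠ j) {f g : α → ℝ≥0∞}
    (hf : Measurable f) (hg : Measurable g) :
    ∫⁻ x, f (x i) * g (x j) ∂Measure.pi (fun _ : ι => μ) = (∫⁻ t, f t ∂μ) * ∫⁻ t, g t ∂μ := by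
  have hindep : IndepFun (fun x : ι → α => x i) (fun x => x j) (Measure.pi fun _ => μ) :=
    (iIndepFun_pi (X := fun _ => id) fun _ => aemeasurable_id).indepFun hij
  calc _ = (∫⁻ x, f (x i) ∂Measure.pi fun _ => μ) * ∫⁻ x, g (x j) ∂Measure.pi fun _ => μ :=
        lintegral_mul_eq_lintegral_mul_lintegral_of_indepFun (hf.comp (measurable_pi_apply i))
          (hg.comp (measurable_pi_apply j)) (hindep.comp hf hg)
    _ = _ := by
        rw [(measurePreserving_eval _ i).lintegral_comp hf,
          (measurePreserving_eval _ j).lintegral_comp hg]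

lemma gaussianPDF_zero_one_le (x : ℝ) : gaussianPDF 0 1 x ≤ ENNReal.ofReal (1 / 2) := by
  have hsqrt : 2 ≤ √(2 * π) := by
    rw [Real.le_sqrt (by norm_num) (by positivity)]
    nlinarith [Real.two_le_pi]
  refine ENNReal.ofReal_le_ofReal ?_
  simp only [gaussianPDFReal_def, NNReal.coe_one, mul_one, sub_zero]
  calc (√(2 * π))⁻¹ * rexp (-x ^ 2 / 2) ≤ 2⁻¹ * 1 := by
        gcongr
        exact Real.exp_le_one_iff.2 (by nlinarith [sq_nonneg x])
    _ = 1 / 2 := by norm_num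

lemma gaussianReal_Icc_le (δ : ℝ) : gaussianReal 0 1 (Set.Icc (-δ) δ) ≤ ENNReal.ofReal δ := by
  rw [gaussianReal_apply 0 one_ne_zero]
  calc ∫⁻ x in Set.Icc (-δ) δ, gaussianPDF 0 1 x
        ≤ ∫⁻ _ in Set.Icc (-δ) δ, ENNReal.ofReal (1 / 2) :=
        lintegral_mono fun x => gaussianPDF_zero_one_le x
    _ = ENNReal.ofReal δ := by
        rw [setLIntegral_const, Real.volume_Icc, ← ENNReal.ofReal_mul (by norm_num)]
        ring_nf

lemma integral_abs_gaussianReal_le_one : ∫ t, |t| ∂gaussianReal 0 1 ≤ 1 := by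
  have hsq : ∫ t, t ^ 2 ∂gaussianReal 0 1 = 1 := by
    have h := variance_of_integral_eq_zero aemeasurable_id
      (integral_id_gaussianReal (μ := 0) (v := 1))
    rw [variance_id_gaussianReal] at h
    exact_mod_cast h.symm
  have hsq_int : Integrable (fun t : ℝ => t ^ 2) (gaussianReal 0 1) :=
    (memLp_id_gaussianReal 2).integrable_sq
  calc ∫ t, |t| ∂gaussianReal 0 1 ≤ ∫ t, (1 + t ^ 2) / 2 ∂gaussianReal 0 1 := by
        refine integral_mono ((memLp_id_gaussianReal 1).integrable le_rfl).abs
          ((integrable_const 1).add hsq_int |>.div_const 2) fun t => ?_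
        nlinarith [sq_nonneg (|t| - 1), sq_abs t]
    _ = 1 := by
        rw [integral_div, integral_add (integrable_const 1) hsq_int, hsq]
        simp

lemma lintegral_const_add_mul_abs_gaussianReal_le {a b : ℝ} (ha : 0 ≤ a) (hb : 0 ≤ b) :
    ∫⁻ t, ENNReal.ofReal (a + b * |t|) ∂gaussianReal 0 1 ≤ ENNReal.ofReal (a + b) := by
  have habs : Integrable (fun t : ℝ => |t|) (gaussianReal 0 1) :=
    ((memLp_id_gaussianReal 1).integrable le_rfl).abs
  have hint : Integrable (fun t : ℝ => a + b * |t|) (gaussianReal 0 1) :=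
    (integrable_const a).add (habs.const_mul b)
  rw [← ofReal_integral_eq_lintegral_ofReal hint (ae_of_all _ fun t => by positivity),
    integral_add (integrable_const a) (habs.const_mul b), integral_const_mul, integral_const,
    probReal_univ, one_smul]
  exact ENNReal.ofReal_le_ofReal (by nlinarith [integral_abs_gaussianReal_le_one])

lemma ofReal_indicator_mul_abs_le {r : ℝ} (hr : r ≠ 0) (ε c₁ c₂ s t : ℝ) :
    ENNReal.ofReal (Set.indicator (Set.Icc (-ε) ε) (fun _ => (1 : ℝ)) (r * s)
        * |c₁ * s + c₂ * t|)
      ≤ Set.indicator (Set.Icc (-(ε / |r|)) (ε / |r|)) 1 s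
        * ENNReal.ofReal (|c₁| * (ε / |r|) + |c₂| * |t|) := by
  by_cases hs : r * s ∈ Set.Icc (-ε) ε
  · have hsδ : s ∈ Set.Icc (-(ε / |r|)) (ε / |r|) := by
      rw [Set.mem_Icc, ← abs_le, le_div_iff₀ (abs_pos.2 hr), mul_comm, ← abs_mul]
      exact abs_le.2 hs
    rw [Set.indicator_of_mem hs, Set.indicator_of_mem hsδ, Pi.one_apply, one_mul, one_mul]
    refine ENNReal.ofReal_le_ofReal ?_
    calc |c₁ * s + c₂ * t| ≤ |c₁| * |s| + |c₂| * |t| := by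
          simpa only [abs_mul] using abs_add_le (c₁ * s) (c₂ * t)
      _ ≤ |c₁| * (ε / |r|) + |c₂| * |t| := by gcongr; exact abs_le.2 hsδ
  · simp [Set.indicator_of_notMem hs]

lemma lintegral_indicator_mul_abs_pi_gaussianReal_le {ι : Type*} [Fintype ι] {i j : ι}
    (hij : i ≠ j) {r ε : ℝ} (hr : r ≠ 0) (hε : 0 ≤ ε) (c₁ c₂ : ℝ) :
    ∫⁻ x, ENNReal.ofReal (Set.indicator (Set.Icc (-ε) ε) (fun _ => (1 : ℝ)) (r * x i)
        * |c₁ * x i + c₂ * x j|) ∂Measure.pi (fun _ : ι => gaussianReal 0 1)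
      ≤ ENNReal.ofReal (ε / |r|) * ENNReal.ofReal (|c₁| * (ε / |r|) + |c₂|) := by
  set δ := ε / |r|
  calc _ ≤ ∫⁻ x, Set.indicator (Set.Icc (-δ) δ) 1 (x i)
          * ENNReal.ofReal (|c₁| * δ + |c₂| * |x j|)
          ∂Measure.pi (fun _ : ι => gaussianReal 0 1) :=
        lintegral_mono fun x => ofReal_indicator_mul_abs_le hr ε c₁ c₂ (x i) (x j)
    _ = gaussianReal 0 1 (Set.Icc (-δ) δ)
          * ∫⁻ t, ENNReal.ofReal (|c₁| * δ + |c₂| * |t|) ∂gaussianReal 0 1 := by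
        rw [lintegral_comp_eval_mul_comp_eval _ hij (measurable_one.indicator measurableSet_Icc)
          (g := fun t => ENNReal.ofReal (|c₁| * δ + |c₂| * |t|)) (by fun_prop),
          lintegral_indicator_one measurableSet_Icc]
    _ ≤ _ := by
        gcongr
        · exact gaussianReal_Icc_le δ
        · exact lintegral_const_add_mul_abs_gaussianReal_le (by positivity) (abs_nonneg c₂)

lemma one_div_two_mul_mul_le {ε ρ a b β : ℝ} (hε : 0 < ε) (hερ : ε ≤ ρ) (ha : 0 ≤ a)
    (haβ : a ≤ β) (hbβ : b ≤ β) : 1 / (2 * ε) * (ε / ρ * (a * (ε / ρ) + b)) ≤ β / ρ := by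
  have hρ : 0 < ρ := hε.trans_le hερ
  have hδ : ε / ρ ≤ 1 := (div_le_one hρ).2 hερ
  rw [show 1 / (2 * ε) * (ε / ρ * (a * (ε / ρ) + b)) = (a * (ε / ρ) + b) / 2 / ρ by field_simp]
  gcongr
  nlinarith

/-- Uniform bound for the Kac–Rice kernel. -/
theorem kac_rice_kernel_uniform_bound :
    ∃ C₁ : ℝ, 0 < C₁ ∧
      ∀ (N : ℕ), 2 ≤ N → ∀ b₁ b₂ : EuclideanSpace ℝ (Fin N),
        LinearIndependent ℝ ![b₁, b₂] →
        ∀ ε : ℝ, 0 < ε → ε ≤ ‖b₁‖ →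
          ENNReal.ofReal (1 / (2 * ε))
            * ∫⁻ a, ENNReal.ofReal
                (Set.indicator (Set.Icc (-ε) ε) (fun _ => (1 : ℝ)) (inner ℝ b₁ a)
                  * |(inner ℝ b₂ a : ℝ)|) ∂(gaussianN N)
            ≤ ENNReal.ofReal (C₁ * ‖b₂‖ / ‖b₁‖) := by
  refine ⟨1, one_pos, fun N hN b₁ b₂ _ ε hε hεb => ?_⟩
  obtain ⟨n, rfl⟩ := Nat.exists_eq_add_of_le' hN
  obtain ⟨B, hr, hB⟩ := exists_orthonormalBasis_inner_sum_smul finrank_euclideanSpace_fin b₁ b₂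
  have hr₀ : inner ℝ b₁ (B 0) ≠ 0 := abs_pos.1 (hr ▸ hε.trans_le hεb)
  have hc : ∀ k, |inner ℝ b₂ (B k)| ≤ ‖b₂‖ := fun k =>
    (abs_real_inner_le_norm _ _).trans_eq (by rw [B.norm_eq_one, mul_one])
  rw [lintegral_gaussianN_eq_lintegral_pi B (by fun_prop (disch := exact measurableSet_Icc))]
  simp_rw [(hB _).1, (hB _).2]
  calc _ ≤ ENNReal.ofReal (1 / (2 * ε)) * (ENNReal.ofReal (ε / ‖b₁‖)
          * ENNReal.ofReal (|inner ℝ b₂ (B 0)| * (ε / ‖b₁‖) + |inner ℝ b₂ (B 1)|)) := by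
        rw [← hr]
        gcongr
        exact lintegral_indicator_mul_abs_pi_gaussianReal_le (by simp) hr₀ hε.le _ _
    _ ≤ ENNReal.ofReal (1 * ‖b₂‖ / ‖b₁‖) := by
        rw [← ENNReal.ofReal_mul (by positivity), ← ENNReal.ofReal_mul (by positivity), one_mul]
        exact ENNReal.ofReal_le_ofReal
          (one_div_two_mul_mul_le hε hεb (abs_nonneg _) (hc 0) (hc 1))
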